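/- Let f : A → 𝒫(A) and suppose (B, ≺) is a ⊑-maximal well-ordered subset of A satisfying the relaxed condition (⋆): f(b) ⊆ {x ∈ B : x ≺ b} for all b ∈ B. Then B is not in the range of f. -/

import Mathlib

/-- A well-ordered subset of `A`: a carrier set together with a relation that
well-orders it. -/
structure WOSub (A : Type*) where
  carrier : Set A
  r : A → A → Prop
  wo : IsWellOrder carrier (fun x y : carrier => r x y)

/-- `ExtLE V W` (`V ⊑ W`): `V` is an initial segment of `W` (or equal to it),
with compatible orders. -/
def ExtLE {A : Type*} (V W : WOSub A) : Prop :=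
  V.carrier ⊆ W.carrier ∧
  (∀ x ∈ V.carrier, ∀ y ∈ V.carrier, (V.r x y ↔ W.r x y)) ∧
  (∀ x ∈ V.carrier, ∀ y ∈ W.carrier, W.r y x → y ∈ V.carrier)

/-- Condition `(∗)`: `f b = B|_{≺ b}` for all `b ∈ B`. -/
def StarEq {A : Type*} (f : A → Set A) (B : WOSub A) : Prop :=
  ∀ b ∈ B.carrier, f b = {x ∈ B.carrier | B.r x b}

/-- Condition `(⋆)`: `f b ⊆ B|_{≺ b}` for all `b ∈ B`. -/
def StarSub {A : Type*} (f : A → Set A) (B : WOSub A) : Prop :=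
  ∀ b ∈ B.carrier, f b ⊆ {x ∈ B.carrier | B.r x b}

/-! If `f a = B` with `a ∈ B`, then `a ∈ f a ⊆ B|_{≺ a}`, contradicting irreflexivity. Otherwise
put `a` on top of `B`: the predecessors of `a` are then exactly `B = f a`, so the extension still
satisfies `(⋆)`, and it is a proper `⊑`-extension of `B`. -/

namespace WOSub

variable {A : Type*}

def insertTop (B : WOSub A) {a : A} (ha : a ∉ B.carrier) : WOSub A where
  carrier := insert a B.carrier
  r x y := x ∈ B.carrier ∧ (y ∈ B.carrier → B.r x y)
  wo := by
    classical
    have := B.wo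
    suffices (fun x y : ↥(insert a B.carrier) => x.1 ∈ B.carrier ∧ (y.1 ∈ B.carrier → B.r x y)) =
        Equiv.Set.insert ha ⁻¹'o Sum.Lex (fun x y : B.carrier => B.r x y) emptyRelation by
      rw [this]; exact RelIso.IsWellOrder.preimage _ _
    ext ⟨x, hx⟩ ⟨y, hy⟩
    rcases hx with rfl | hx <;> rcases hy with rfl | hy
    · simp [Order.Preimage, ha]
    · simp [Order.Preimage, ha, hy, Equiv.Set.insert_apply_right ha ⟨_, hy⟩]
    · simp [Order.Preimage, ha, hx, Equiv.Set.insert_apply_right ha ⟨_, hx⟩]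
    · simp [Order.Preimage, hx, hy, Equiv.Set.insert_apply_right ha ⟨_, hx⟩,
        Equiv.Set.insert_apply_right ha ⟨_, hy⟩]

theorem extLE_insertTop (B : WOSub A) {a : A} (ha : a ∉ B.carrier) : ExtLE B (B.insertTop ha) :=
  ⟨Set.subset_insert a _, fun x hx y hy => by simp [insertTop, hx, hy], fun _ _ _ _ hyx => hyx.1⟩

end WOSub

namespace StarSub

variable {A : Type*} {f : A → Set A} {B : WOSub A}

theorem notMem_apply_self (hB : StarSub f B) {b : A} (hb : b ∈ B.carrier) : b ∉ f b := by
  have := B.wo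
  exact fun h => irrefl (r := fun x y : B.carrier => B.r x y) ⟨b, hb⟩ (hB b hb h).2

theorem insertTop (hB : StarSub f B) {a : A} (ha : a ∉ B.carrier) (hfa : f a ⊆ B.carrier) :
    StarSub f (B.insertTop ha) := by
  rintro b (rfl | hb) x hx
  · exact ⟨Or.inr (hfa hx), hfa hx, fun h => (ha h).elim⟩
  · obtain ⟨hxB, hxb⟩ := hB b hb hx
    exact ⟨Or.inr hxB, hxB, fun _ => hxb⟩

end StarSub

theorem maximal_starSub_not_in_range
    {A : Type*} (f : A → Set A) (B : WOSub A)
    (hstar : StarSub f B)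
    (hmax : ∀ B' : WOSub A, ExtLE B B' → StarSub f B' → B'.carrier = B.carrier) :
    B.carrier ∉ Set.range f := by
  rintro ⟨a, hfa⟩
  by_cases ha : a ∈ B.carrier
  · exact hstar.notMem_apply_self ha (hfa ▸ ha)
  · have hcarrier := hmax _ (B.extLE_insertTop ha) (hstar.insertTop ha hfa.subset)
    exact ha (hcarrier ▸ Set.mem_insert a B.carrier)
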